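/- Let c, D, k > 0 be such that c⁴/(4D²) ≠ c² l(l+1) k² for every natural number l, and let γ ∈ [0,1]. For l ∈ ℕ define A_l(t) = cosh(tK_l) + (c²/(2DK_l))·sinh(tK_l) if c⁴/(4D²) > c² l(l+1) k² (with K_l = sqrt(c⁴/(4D²) − c² l(l+1)k²)) and A_l(t) = 0 otherwise; define B_l(t) = cos(tK_l') + (c²/(2DK_l'))·sin(tK_l') if c² l(l+1) k² > c⁴/(4D²) (with K_l' = sqrt(c² l(l+1)k² − c⁴/(4D²))) and B_l(t) = 0 otherwise. Let P_l denote the l-th Legendre polynomial, and let (C_l)_{l≥0} be nonnegative reals with ∑_{l=0}^∞ (2l+1)^{1+2γ} C_l < ∞. Then there exists a constant C > 0, depending only on c, D and k, such that for all t ≥ 0 and all Θ ∈ [0, π]: exp(−c²t/D) · ∑_{l=0}^∞ (2l+1) C_l · (A_l(t)² + B_l(t)²) · (1 − P_l(cos Θ)) ≤ C · (1 − cos Θ)^γ · ∑_{l=0}^∞ (2l+1)^{1+2γ} C_l. -/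

import Mathlib

/-!
With `β = c² / (2D)` the damping factor is `exp (-2βt)`. On the finitely many subcritical modes
`A_l(t) ≤ (1 + β / K_l) exp (t K_l)` with `K_l ≤ β`, and on the supercritical ones
`|B_l(t)| ≤ 1 + β / K_l'`. Since `c² l(l+1) k² → ∞` never equals `β²`, all frequencies are
bounded below by a common `κ > 0`, so `exp (-c²t/D) (A_l² + B_l²) ≤ (1 + β / κ)²` uniformly.

For the Legendre factor, the energy `μ u² + (1 - x²) u'²` of a solution of
`(1 - x²) u'' = a x u' - μ u` with `a ≥ 1` increases with `|x|`, hence is largest at `±1`.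
Applied to `P_l` and to `P_l'` this gives `|P_l| ≤ 1` and `|P_l'| ≤ l(l+1)/2` on `[-1, 1]`, so
`1 - P_l(x) ≤ 2 min(1, (2l+1)² (1 - x)) ≤ 2 (2l+1)^{2γ} (1 - x)^γ`. The series is then compared
termwise with `∑ (2l+1)^{1+2γ} C_l`.
-/

open Real

/-- The subcritical frequency parameter `K_l`. -/
noncomputable def Kl (c D k : ℝ) (l : ℕ) : ℝ :=
  Real.sqrt (c^4/(4*D^2) - c^2*(l:ℝ)*((l:ℝ)+1)*k^2)

/-- The supercritical frequency parameter `K_l'`. -/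
noncomputable def Kl' (c D k : ℝ) (l : ℕ) : ℝ :=
  Real.sqrt (c^2*(l:ℝ)*((l:ℝ)+1)*k^2 - c^4/(4*D^2))

/-- The subcritical (hyperbolic) amplitude factor `A_l(t)`, vanishing on the
supercritical branch. -/
noncomputable def Afun (c D k : ℝ) (l : ℕ) (t : ℝ) : ℝ :=
  if c^2*(l:ℝ)*((l:ℝ)+1)*k^2 < c^4/(4*D^2) then
    Real.cosh (t * Kl c D k l) + (c^2/(2*D*Kl c D k l)) * Real.sinh (t * Kl c D k l)
  else 0

/-- The supercritical (oscillatory) amplitude factor `B_l(t)`, vanishing on the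
subcritical branch. -/
noncomputable def Bfun (c D k : ℝ) (l : ℕ) (t : ℝ) : ℝ :=
  if c^4/(4*D^2) < c^2*(l:ℝ)*((l:ℝ)+1)*k^2 then
    Real.cos (t * Kl' c D k l) + (c^2/(2*D*Kl' c D k l)) * Real.sin (t * Kl' c D k l)
  else 0

/-- The `l`-th Legendre polynomial on `ℝ`, via Rodrigues' formula. -/
noncomputable def legendreP (l : ℕ) (x : ℝ) : ℝ :=
  (1 / (2^l * (Nat.factorial l : ℝ))) * iteratedDeriv l (fun y : ℝ => (y^2 - 1)^l) x

open Polynomial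

namespace Polynomial

section CommRing

variable {R : Type*} [CommRing R]

theorem iterate_derivative_succ_X_sq_sub_one_mul_derivative (n : ℕ) (q : R[X]) :
    derivative^[n + 1] ((X ^ 2 - 1) * derivative q) =
      (X ^ 2 - 1) * derivative^[n + 2] q + C (2 * ((n : R) + 1)) * X * derivative^[n + 1] q +
        C ((n : R) * (n + 1)) * derivative^[n] q := by
  induction n with
  | zero =>
    simp only [zero_add, Nat.cast_zero, zero_mul, map_zero, mul_one,
      Function.iterate_succ_apply', Function.iterate_zero_apply, derivative_mul, derivative_sub,
      derivative_X_pow, derivative_one]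
    simp only [Nat.cast_ofNat, C_ofNat]
    ring
  | succ n ih =>
    rw [Function.iterate_succ_apply', ih]
    simp only [derivative_mul, derivative_add, derivative_C, derivative_X, derivative_sub,
      derivative_X_pow, derivative_one, ← Function.iterate_succ_apply' derivative]
    push_cast
    simp only [map_add, map_mul, map_natCast, map_one, map_ofNat]
    ring

theorem X_sq_sub_one_mul_derivative_pow (l : ℕ) :
    (X ^ 2 - 1) * derivative ((X ^ 2 - 1 : R[X]) ^ l) = C (2 * (l : R)) * X * (X ^ 2 - 1) ^ l := by
  cases l with
  | zero => simp
  | succ n =>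
    rw [derivative_pow_succ, derivative_sub, derivative_X_pow, derivative_one]
    push_cast
    simp only [map_mul, map_add, map_natCast, map_one, C_ofNat]
    ring

theorem eval_iterate_derivative_X_sub_C_pow_mul (n : ℕ) (a : R) (q : R[X]) :
    (derivative^[n] ((X - C a) ^ n * q)).eval a = n.factorial * q.eval a := by
  rw [iterate_derivative_mul, eval_finsetSum, Finset.sum_eq_single 0]
  · simp [iterate_derivative_X_sub_pow_self]
  · intro k hk hk0
    simp [iterate_derivative_X_sub_pow, Nat.sub_sub_self (Finset.mem_range_succ_iff.mp hk), hk0]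
  · simp

end CommRing

theorem iteratedDeriv_eval {𝕜 : Type*} [NontriviallyNormedField 𝕜] (p : 𝕜[X]) (n : ℕ) :
    iteratedDeriv n (fun x => p.eval x) = fun x => (derivative^[n] p).eval x := by
  induction n generalizing p with
  | zero => simp
  | succ n ih =>
    rw [iteratedDeriv_succ', Function.iterate_succ_apply, ← ih]
    congr 1
    funext x
    exact p.deriv

theorem eval_le_max_of_mul_derivative_nonneg (E : ℝ[X])
    (hE : ∀ y, 0 ≤ y * (derivative E).eval y) {a b x : ℝ} (hx : x ∈ Set.Icc a b) :
    E.eval x ≤ max (E.eval a) (E.eval b) := by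
  rcases le_or_gt 0 x with hx0 | hx0
  · have hmono : MonotoneOn (fun y => E.eval y) (Set.Ici 0) :=
      monotoneOn_of_deriv_nonneg (convex_Ici 0) E.continuousOn E.differentiableOn
        (fun y hy => by
          rw [interior_Ici] at hy
          rw [Polynomial.deriv]
          exact nonneg_of_mul_nonneg_right (by simpa [mul_comm] using hE y) hy)
    exact (hmono hx0 (hx0.trans hx.2) hx.2).trans (le_max_right _ _)
  · have hanti : AntitoneOn (fun y => E.eval y) (Set.Iic 0) :=
      antitoneOn_of_deriv_nonpos (convex_Iic 0) E.continuousOn E.differentiableOn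
        (fun y hy => by
          rw [interior_Iic] at hy
          rw [Polynomial.deriv]
          exact nonpos_of_mul_nonneg_right (hE y) hy)
    exact (hanti (hx.1.trans hx0.le) hx0.le hx.1).trans (le_max_left _ _)

theorem sq_eval_le_max_of_ode {p : ℝ[X]} {a μ : ℝ} (ha : 1 ≤ a) (hμ : 0 < μ)
    (hp : (1 - X ^ 2) * derivative (derivative p) = C a * X * derivative p - C μ * p)
    {x : ℝ} (hx : x ∈ Set.Icc (-1) 1) :
    p.eval x ^ 2 ≤ max (p.eval (-1) ^ 2) (p.eval 1 ^ 2) := by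
  set E : ℝ[X] := C μ * p ^ 2 + (1 - X ^ 2) * derivative p ^ 2
  have hE : derivative E = C (2 * a - 2) * X * derivative p ^ 2 := by
    simp only [E, derivative_add, derivative_mul, derivative_C, derivative_sub, derivative_one,
      derivative_X, derivative_sq]
    simp only [map_sub, map_mul, C_ofNat]
    linear_combination (2 * derivative p) * hp
  have hEx := E.eval_le_max_of_mul_derivative_nonneg (fun y => by
    rw [hE, eval_mul, eval_mul, eval_C, eval_X, eval_pow]
    nlinarith [mul_nonneg (sub_nonneg.mpr ha) (sq_nonneg (y * (derivative p).eval y))]) hx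
  have hx2 : 0 ≤ 1 - x ^ 2 := by nlinarith [hx.1, hx.2]
  simp only [E, eval_add, eval_mul, eval_C, eval_pow, eval_sub, eval_one, eval_X, neg_one_sq,
    one_pow, sub_self, zero_mul, add_zero] at hEx
  rw [← mul_max_of_nonneg _ _ hμ.le] at hEx
  nlinarith [mul_nonneg hx2 (sq_nonneg ((derivative p).eval x))]

end Polynomial

noncomputable def legendre (l : ℕ) : ℝ[X] :=
  C (1 / (2 ^ l * (l.factorial : ℝ))) * derivative^[l] ((X ^ 2 - 1) ^ l)

theorem legendreP_eq_eval (l : ℕ) (x : ℝ) : legendreP l x = (legendre l).eval x := by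
  have h : (fun y : ℝ => (y ^ 2 - 1) ^ l) = fun y => ((X ^ 2 - 1) ^ l : ℝ[X]).eval y := by
    simp
  rw [legendreP, h, iteratedDeriv_eval, legendre, eval_mul, eval_C]

theorem legendre_zero : legendre 0 = 1 := by simp [legendre]

theorem legendre_one : legendre 1 = X := by
  simp only [legendre, pow_one, Function.iterate_one, derivative_sub, derivative_X_pow,
    derivative_one, sub_zero, Nat.factorial_one, Nat.cast_one, mul_one, ← mul_assoc, ← C_mul]
  norm_num

theorem legendre_ode (l : ℕ) :
    (1 - X ^ 2) * derivative (derivative (legendre l)) =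
      C 2 * X * derivative (legendre l) - C ((l : ℝ) * (l + 1)) * legendre l := by
  have h := congrArg derivative^[l + 1] (X_sq_sub_one_mul_derivative_pow (R := ℝ) l)
  rw [iterate_derivative_succ_X_sq_sub_one_mul_derivative, mul_assoc (C (2 * (l : ℝ))),
    iterate_derivative_C_mul, mul_comm X, iterate_derivative_mul_X] at h
  simp only [legendre, derivative_C_mul, ← Function.iterate_succ_apply' derivative] at h ⊢
  simp only [Nat.add_sub_cancel, nsmul_eq_mul, map_mul, map_add, map_natCast, map_one,
    C_ofNat] at h ⊢
  push_cast at h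
  linear_combination (-C (1 / (2 ^ l * (l.factorial : ℝ)))) * h

theorem legendre_eval_one (l : ℕ) : (legendre l).eval 1 = 1 := by
  have h : ((X ^ 2 - 1) ^ l : ℝ[X]) = (X - C 1) ^ l * (X - C (-1)) ^ l := by
    rw [← mul_pow]; simp only [map_neg, map_one]; ring
  rw [legendre, eval_mul, eval_C, h, eval_iterate_derivative_X_sub_C_pow_mul]
  have := l.factorial_pos
  simp only [eval_pow, eval_sub, eval_X, eval_C]
  field_simp
  norm_num

theorem legendre_eval_neg_one (l : ℕ) : (legendre l).eval (-1) = (-1) ^ l := by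
  have h : ((X ^ 2 - 1) ^ l : ℝ[X]) = (X - C (-1)) ^ l * (X - C 1) ^ l := by
    rw [← mul_pow]; simp only [map_neg, map_one]; ring
  rw [legendre, eval_mul, eval_C, h, eval_iterate_derivative_X_sub_C_pow_mul]
  have := l.factorial_pos
  simp only [eval_pow, eval_sub, eval_X, eval_C]
  rw [show (-1 - 1 : ℝ) = 2 * (-1) by norm_num, mul_pow]
  field_simp

theorem sq_eval_legendre_le_one (l : ℕ) {x : ℝ} (hx : x ∈ Set.Icc (-1) 1) :
    (legendre l).eval x ^ 2 ≤ 1 := by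
  rcases Nat.eq_zero_or_pos l with rfl | hl
  · simp [legendre_zero]
  · have hμ : (0 : ℝ) < l * (l + 1) := by positivity
    have h := sq_eval_le_max_of_ode (by norm_num) hμ (legendre_ode l) hx
    rwa [legendre_eval_one, legendre_eval_neg_one, ← pow_mul, mul_comm, pow_mul, neg_one_sq,
      one_pow, one_pow, max_self] at h

theorem derivative_legendre_ode (l : ℕ) :
    (1 - X ^ 2) * derivative (derivative (derivative (legendre l))) =
      C 4 * X * derivative (derivative (legendre l)) -
        C ((l : ℝ) * (l + 1) - 2) * derivative (legendre l) := by
  have h := congrArg derivative (legendre_ode l)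
  simp only [derivative_mul, derivative_sub, derivative_one, derivative_X_pow, derivative_C,
    derivative_X] at h
  simp only [map_sub, Nat.cast_ofNat, C_ofNat] at h ⊢
  linear_combination h

theorem derivative_legendre_eval_one (l : ℕ) :
    (derivative (legendre l)).eval 1 = l * (l + 1) / 2 := by
  have h := congrArg (eval 1) (legendre_ode l)
  simp only [eval_mul, eval_sub, eval_C, eval_X, eval_one, eval_pow, legendre_eval_one] at h
  linarith

theorem derivative_legendre_eval_neg_one (l : ℕ) :
    (derivative (legendre l)).eval (-1) = -((-1) ^ l * (l * (l + 1) / 2)) := by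
  have h := congrArg (eval (-1)) (legendre_ode l)
  simp only [eval_mul, eval_sub, eval_C, eval_X, eval_one, eval_pow, legendre_eval_neg_one] at h
  linarith

theorem sq_eval_derivative_legendre_le (l : ℕ) {x : ℝ} (hx : x ∈ Set.Icc (-1) 1) :
    (derivative (legendre l)).eval x ^ 2 ≤ ((l : ℝ) * (l + 1) / 2) ^ 2 := by
  match l with
  | 0 => simp [legendre_zero]
  | 1 => norm_num [legendre_one]
  | n + 2 =>
    have hμ : (0 : ℝ) < ((n + 2 : ℕ) : ℝ) * ((n + 2 : ℕ) + 1) - 2 := by push_cast; nlinarith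
    have h := sq_eval_le_max_of_ode (by norm_num) hμ (derivative_legendre_ode (n + 2)) hx
    rwa [derivative_legendre_eval_one, derivative_legendre_eval_neg_one, neg_sq, mul_pow,
      ← pow_mul, mul_comm _ 2, pow_mul, neg_one_sq, one_pow, one_mul, max_self] at h

theorem abs_legendreP_le_one (l : ℕ) {x : ℝ} (hx : x ∈ Set.Icc (-1) 1) :
    |legendreP l x| ≤ 1 := by
  rw [legendreP_eq_eval, ← sq_le_one_iff_abs_le_one]
  exact sq_eval_legendre_le_one l hx

theorem one_sub_legendreP_nonneg (l : ℕ) {x : ℝ} (hx : x ∈ Set.Icc (-1) 1) :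
    0 ≤ 1 - legendreP l x :=
  sub_nonneg.mpr (abs_le.mp (abs_legendreP_le_one l hx)).2

theorem one_sub_legendreP_le (l : ℕ) {x : ℝ} (hx : x ∈ Set.Icc (-1) 1) :
    1 - legendreP l x ≤ l * (l + 1) / 2 * (1 - x) := by
  have hL : (0 : ℝ) ≤ l * (l + 1) / 2 := by positivity
  have hmono : MonotoneOn (fun y => (C ((l : ℝ) * (l + 1) / 2) * X - legendre l).eval y)
      (Set.Icc (-1) 1) := by
    refine monotoneOn_of_deriv_nonneg (convex_Icc _ _) (Polynomial.continuousOn _)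
      (Polynomial.differentiableOn _) fun y hy => ?_
    rw [interior_Icc] at hy
    have hy' :=
      abs_le_of_sq_le_sq' (sq_eval_derivative_legendre_le l (Set.Ioo_subset_Icc_self hy)) hL
    rw [Polynomial.deriv]
    simp only [derivative_sub, derivative_C_mul_X, eval_sub, eval_C]
    linarith [hy'.2]
  have h := hmono hx (Set.right_mem_Icc.mpr (by norm_num)) hx.2
  simp only [eval_sub, eval_mul, eval_C, eval_X, legendre_eval_one] at h
  rw [legendreP_eq_eval]
  linarith

theorem min_one_le_rpow {m γ : ℝ} (hm : 0 ≤ m) (hγ : γ ∈ Set.Icc (0 : ℝ) 1) :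
    min 1 m ≤ m ^ γ := by
  rcases le_total m 1 with hm1 | hm1
  · calc min 1 m ≤ m := min_le_right _ _
      _ = m ^ (1 : ℝ) := (Real.rpow_one m).symm
      _ ≤ m ^ γ := Real.rpow_le_rpow_of_exponent_ge' hm hm1 hγ.1 hγ.2
  · exact (min_le_left _ _).trans (Real.one_le_rpow hm1 hγ.1)

theorem one_sub_legendreP_le_rpow (l : ℕ) {x : ℝ} (hx : x ∈ Set.Icc (-1) 1)
    {γ : ℝ} (hγ : γ ∈ Set.Icc (0 : ℝ) 1) :
    1 - legendreP l x ≤ 2 * (2 * l + 1) ^ (2 * γ) * (1 - x) ^ γ := by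
  have h1x : 0 ≤ 1 - x := by linarith [hx.2]
  set m : ℝ := (2 * l + 1) ^ 2 * (1 - x)
  have hle_two : 1 - legendreP l x ≤ 2 * 1 := by
    linarith [(abs_le.mp (abs_legendreP_le_one l hx)).1]
  have hle_m : 1 - legendreP l x ≤ 2 * m := by
    refine (one_sub_legendreP_le l hx).trans ?_
    have : (l : ℝ) * (l + 1) / 2 ≤ 2 * (2 * l + 1) ^ 2 := by nlinarith
    nlinarith
  have hm : m ^ γ = (2 * l + 1) ^ (2 * γ) * (1 - x) ^ γ := by
    rw [Real.mul_rpow (by positivity) h1x, Real.rpow_mul (by positivity), Real.rpow_two]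
  calc 1 - legendreP l x ≤ 2 * min 1 m := by
        rw [mul_min_of_nonneg _ _ zero_le_two]; exact le_min hle_two hle_m
    _ ≤ 2 * m ^ γ := by gcongr; exact min_one_le_rpow (by positivity) hγ
    _ = 2 * (2 * l + 1) ^ (2 * γ) * (1 - x) ^ γ := by rw [hm, mul_assoc]

theorem mul_one_sub_legendreP_le (l : ℕ) {E M a x γ : ℝ} (hM : 0 ≤ M) (hE : E ≤ M) (ha : 0 ≤ a)
    (hx : x ∈ Set.Icc (-1) 1) (hγ : γ ∈ Set.Icc (0 : ℝ) 1) :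
    (2 * l + 1) * a * E * (1 - legendreP l x) ≤
      2 * M * (1 - x) ^ γ * ((2 * l + 1) ^ (1 + 2 * γ) * a) := by
  calc (2 * l + 1) * a * E * (1 - legendreP l x)
      ≤ (2 * l + 1) * a * M * (2 * (2 * l + 1) ^ (2 * γ) * (1 - x) ^ γ) := by
        gcongr
        · exact one_sub_legendreP_nonneg l hx
        · exact one_sub_legendreP_le_rpow l hx hγ
    _ = 2 * M * (1 - x) ^ γ * ((2 * l + 1) ^ (1 + 2 * γ) * a) := by
        rw [Real.rpow_add (by positivity), Real.rpow_one]; ring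

open Filter in
theorem exists_pos_le_abs_sub_of_tendsto_atTop {f : ℕ → ℝ} {a : ℝ}
    (hf : Tendsto f atTop atTop) (hfa : ∀ n, f n ≠ a) : ∃ δ > 0, ∀ n, δ ≤ |f n - a| := by
  obtain ⟨N, hN⟩ := eventually_atTop.mp (hf.eventually_ge_atTop (a + 1))
  obtain ⟨n₀, -, hn₀⟩ := (Finset.range (N + 1)).exists_min_image (fun n => |f n - a|)
    Finset.nonempty_range_add_one
  refine ⟨min 1 |f n₀ - a|, lt_min one_pos (abs_pos.mpr (sub_ne_zero.mpr (hfa n₀))), fun n => ?_⟩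
  rcases le_or_gt N n with hn | hn
  · exact (min_le_left _ _).trans (by rw [abs_of_nonneg] <;> linarith [hN n hn])
  · exact (min_le_right _ _).trans (hn₀ n (Finset.mem_range.mpr (by omega)))

theorem exp_mul_sq_cosh_add_div_mul_sinh_le {β K t : ℝ} (hK : 0 < K) (hKβ : K ≤ β) (ht : 0 ≤ t) :
    exp (-(2 * β * t)) * (cosh (t * K) + β / K * sinh (t * K)) ^ 2 ≤ (1 + β / K) ^ 2 := by
  have hr : 0 ≤ β / K := div_nonneg (hK.le.trans hKβ) hK.le
  have hsinh : 0 ≤ sinh (t * K) := Real.sinh_nonneg_iff.mpr (by positivity)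
  have hnonneg : 0 ≤ cosh (t * K) + β / K * sinh (t * K) := by
    have := Real.cosh_pos (t * K); positivity
  have hle : exp (-(β * t)) * (cosh (t * K) + β / K * sinh (t * K)) ≤ 1 + β / K := by
    have hexp : exp (-(β * t)) * exp (t * K) ≤ 1 := by
      rw [← Real.exp_add, Real.exp_le_one_iff]; nlinarith
    have hcs : cosh (t * K) + β / K * sinh (t * K) ≤ (1 + β / K) * exp (t * K) := by
      rw [← Real.cosh_add_sinh]; nlinarith [Real.cosh_pos (t * K)]
    calc exp (-(β * t)) * (cosh (t * K) + β / K * sinh (t * K))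
        ≤ exp (-(β * t)) * ((1 + β / K) * exp (t * K)) := by gcongr
      _ = (1 + β / K) * (exp (-(β * t)) * exp (t * K)) := by ring
      _ ≤ 1 + β / K := mul_le_of_le_one_right (by positivity) hexp
  calc exp (-(2 * β * t)) * (cosh (t * K) + β / K * sinh (t * K)) ^ 2
      = (exp (-(β * t)) * (cosh (t * K) + β / K * sinh (t * K))) ^ 2 := by
        rw [mul_pow, ← Real.exp_nat_mul]; ring_nf
    _ ≤ (1 + β / K) ^ 2 := by gcongr

theorem exp_mul_sq_cos_add_div_mul_sin_le {β K t : ℝ} (hK : 0 < K) (hβ : 0 ≤ β) (ht : 0 ≤ t) :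
    exp (-(2 * β * t)) * (cos (t * K) + β / K * sin (t * K)) ^ 2 ≤ (1 + β / K) ^ 2 := by
  have hr : 0 ≤ β / K := div_nonneg hβ hK.le
  have habs : |cos (t * K) + β / K * sin (t * K)| ≤ 1 + β / K := by
    calc |cos (t * K) + β / K * sin (t * K)| ≤ |cos (t * K)| + β / K * |sin (t * K)| :=
          (abs_add_le _ _).trans_eq (by rw [abs_mul, abs_of_nonneg hr])
      _ ≤ 1 + β / K :=
          add_le_add (abs_cos_le_one _) (mul_le_of_le_one_right hr (abs_sin_le_one _))
  have hexp : exp (-(2 * β * t)) ≤ 1 := Real.exp_le_one_iff.mpr (by nlinarith)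
  calc exp (-(2 * β * t)) * (cos (t * K) + β / K * sin (t * K)) ^ 2
      ≤ (cos (t * K) + β / K * sin (t * K)) ^ 2 := mul_le_of_le_one_left (sq_nonneg _) hexp
    _ ≤ (1 + β / K) ^ 2 := sq_le_sq' (abs_le.mp habs).1 (abs_le.mp habs).2

theorem Kl_le {c D : ℝ} (k : ℝ) (hD : 0 < D) (l : ℕ) : Kl c D k l ≤ c ^ 2 / (2 * D) := by
  rw [Kl, show c^4/(4*D^2) = (c ^ 2 / (2 * D)) ^ 2 by ring]
  exact (Real.sqrt_le_sqrt (sub_le_self _ (by positivity))).trans_eq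
    (Real.sqrt_sq (by positivity))

theorem exp_mul_sq_Afun_le {c D k κ t : ℝ} {l : ℕ} (hD : 0 < D)
    (hl : c^2*(l:ℝ)*((l:ℝ)+1)*k^2 < c^4/(4*D^2)) (hκ : 0 < κ) (hκK : κ ≤ Kl c D k l)
    (ht : 0 ≤ t) : exp (-c^2*t/D) * Afun c D k l t ^ 2 ≤ (1 + c ^ 2 / (2 * D) / κ) ^ 2 := by
  rw [Afun, if_pos hl, ← div_div (c ^ 2) (2 * D),
    show -c^2*t/D = -(2 * (c ^ 2 / (2 * D)) * t) by ring]
  have hK := hκ.trans_le hκK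
  refine (exp_mul_sq_cosh_add_div_mul_sinh_le hK (Kl_le k hD l) ht).trans ?_
  gcongr

theorem exp_mul_sq_Bfun_le {c D k κ t : ℝ} {l : ℕ} (hD : 0 < D)
    (hl : c^4/(4*D^2) < c^2*(l:ℝ)*((l:ℝ)+1)*k^2) (hκ : 0 < κ) (hκK : κ ≤ Kl' c D k l)
    (ht : 0 ≤ t) : exp (-c^2*t/D) * Bfun c D k l t ^ 2 ≤ (1 + c ^ 2 / (2 * D) / κ) ^ 2 := by
  rw [Bfun, if_pos hl, ← div_div (c ^ 2) (2 * D),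
    show -c^2*t/D = -(2 * (c ^ 2 / (2 * D)) * t) by ring]
  have hK := hκ.trans_le hκK
  refine (exp_mul_sq_cos_add_div_mul_sin_le hK (by positivity) ht).trans ?_
  gcongr

theorem exists_exp_mul_amplitude_le {c D k : ℝ} (hc : 0 < c) (hD : 0 < D) (hk : 0 < k)
    (hnd : ∀ l : ℕ, c^4/(4*D^2) ≠ c^2*(l:ℝ)*((l:ℝ)+1)*k^2) :
    ∃ M > 0, ∀ (l : ℕ) (t : ℝ), 0 ≤ t →
      exp (-c^2*t/D) * ((Afun c D k l t)^2 + (Bfun c D k l t)^2) ≤ M := by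
  have htendsto : Filter.Tendsto (fun l : ℕ => c^2*(l:ℝ)*((l:ℝ)+1)*k^2) Filter.atTop
      Filter.atTop := by
    refine Filter.tendsto_atTop_mono (fun l => ?_)
      (tendsto_natCast_atTop_atTop.const_mul_atTop (by positivity : 0 < c ^ 2 * k ^ 2))
    have : (0 : ℝ) ≤ c ^ 2 * k ^ 2 * l := by positivity
    nlinarith
  obtain ⟨δ, hδ, hgap⟩ := exists_pos_le_abs_sub_of_tendsto_atTop htendsto (fun l => (hnd l).symm)
  have hκ : 0 < √δ := Real.sqrt_pos.mpr hδ
  refine ⟨(1 + c ^ 2 / (2 * D) / √δ) ^ 2, by positivity, fun l t ht => ?_⟩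
  rcases lt_or_gt_of_ne (hnd l).symm with hlt | hgt
  · have hκK : √δ ≤ Kl c D k l := Real.sqrt_le_sqrt <| by
      have := hgap l
      rw [abs_of_neg (sub_neg.mpr hlt)] at this
      linarith
    rw [Bfun, if_neg hlt.not_gt, zero_pow two_ne_zero, add_zero]
    exact exp_mul_sq_Afun_le hD hlt hκ hκK ht
  · have hκK : √δ ≤ Kl' c D k l := Real.sqrt_le_sqrt <| by
      have := hgap l
      rw [abs_of_pos (sub_pos.mpr hgt)] at this
      linarith
    rw [Afun, if_neg hgt.not_gt, zero_pow two_ne_zero, zero_add]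
    exact exp_mul_sq_Bfun_le hD hgt hκ hκK ht

/-- series-level form of Corollary 5 (Hölder continuity of order `γ` in
the spatial variable of the solution of the spherical hyperbolic diffusion equation,
uniformly in time). -/
theorem stmt_18 (c D k : ℝ) (hc : 0 < c) (hD : 0 < D) (hk : 0 < k)
    (hnd : ∀ l : ℕ, c^4/(4*D^2) ≠ c^2*(l:ℝ)*((l:ℝ)+1)*k^2)
    (γ : ℝ) (hγ : γ ∈ Set.Icc (0:ℝ) 1)
    (C : ℕ → ℝ) (hC : ∀ l, 0 ≤ C l)
    (hsum : Summable (fun l : ℕ => (2*(l:ℝ)+1)^(1+2*γ) * C l)) :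
    ∃ C₀ : ℝ, 0 < C₀ ∧ ∀ t : ℝ, 0 ≤ t → ∀ Θ : ℝ, Θ ∈ Set.Icc (0:ℝ) π →
      Real.exp (-c^2*t/D) *
        ∑' l : ℕ, (2*(l:ℝ)+1) * C l *
          ((Afun c D k l t)^2 + (Bfun c D k l t)^2) * (1 - legendreP l (Real.cos Θ))
      ≤ C₀ * (1 - Real.cos Θ)^γ *
          ∑' l : ℕ, (2*(l:ℝ)+1)^(1+2*γ) * C l := by
  obtain ⟨M, hM, hamp⟩ := exists_exp_mul_amplitude_le hc hD hk hnd
  refine ⟨2 * M, by positivity, fun t ht Θ _ => ?_⟩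
  have hx : cos Θ ∈ Set.Icc (-1) 1 := ⟨neg_one_le_cos Θ, cos_le_one Θ⟩
  have hterm : ∀ l : ℕ, exp (-c^2*t/D) * ((2*(l:ℝ)+1) * C l *
        ((Afun c D k l t)^2 + (Bfun c D k l t)^2) * (1 - legendreP l (cos Θ)))
      ≤ 2 * M * (1 - cos Θ) ^ γ * ((2*(l:ℝ)+1)^(1+2*γ) * C l) := fun l => by
    calc _ = (2*(l:ℝ)+1) * C l * (exp (-c^2*t/D) * ((Afun c D k l t)^2 + (Bfun c D k l t)^2))
          * (1 - legendreP l (cos Θ)) := by ring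
      _ ≤ _ := mul_one_sub_legendreP_le l hM.le (hamp l t ht) (hC l) hx hγ
  have hnonneg : ∀ l : ℕ, 0 ≤ exp (-c^2*t/D) * ((2*(l:ℝ)+1) * C l *
      ((Afun c D k l t)^2 + (Bfun c D k l t)^2) * (1 - legendreP l (cos Θ))) := fun l => by
    have := hC l; have := one_sub_legendreP_nonneg l hx; positivity
  have hbound := hsum.mul_left (2 * M * (1 - cos Θ) ^ γ)
  rw [← tsum_mul_left, ← tsum_mul_left]
  exact (hbound.of_nonneg_of_le hnonneg hterm).tsum_le_tsum hterm hbound
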